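/- For all real numbers t and s: the almost complex structure J on 𝔫'_{t,s} is integrable (N_J ≡ 0), the inner product g making e₁,…,e₆ orthonormal is compatible with J, and the resulting Hermitian structure (J,g) is strong KT. -/

import Mathlib

/-!
The bracket of `𝔫'_{t,s}` is `⁅x, y⁆ = ω(x, y) e₆` with `ω = α ∧ β` decomposable, where
`α = t e¹ + s e³` and `β = α ∘ J = -(t e² + s e⁴)`. Since also `β ∘ J = -α`, the form `ω` is
`J`-invariant, i.e. of type `(1,1)`, which kills the Nijenhuis tensor. As `α` and `β` vanish on
`e₆` and `J e₆`, `dτ` is a multiple of `ω ∧ ω`, which is zero because `ω` is decomposable.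
-/

/-- The Chevalley–Eilenberg differential of a `2`-form `F` on a real Lie algebra. -/
def dTwoForm {L : Type} [LieRing L] (F : L → L → ℝ) (x y z : L) : ℝ :=
  -F ⁅x, y⁆ z + F ⁅x, z⁆ y - F ⁅y, z⁆ x

/-- The Chevalley–Eilenberg differential of a `3`-form `τ` on a real Lie algebra. -/
def dThreeForm {L : Type} [LieRing L] (τ : L → L → L → ℝ) (x y z w : L) : ℝ :=
  -τ ⁅x, y⁆ z w + τ ⁅x, z⁆ y w - τ ⁅x, w⁆ y z - τ ⁅y, z⁆ x w + τ ⁅y, w⁆ x z - τ ⁅z, w⁆ x y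

/-- `(J, g)` is strong Kähler with torsion: the `3`-form `τ(x,y,z) = −(dF)(Jx,Jy,Jz)`,
where `F(x,y) = g(Jx,y)` is the fundamental `2`-form, is closed, i.e. `dτ = 0`. -/
def IsStrongKT {L : Type} [LieRing L] [LieAlgebra ℝ L]
    (J : L →ₗ[ℝ] L) (g : L →ₗ[ℝ] L →ₗ[ℝ] ℝ) : Prop :=
  ∀ x y z w : L,
    dThreeForm (fun a b c => -(dTwoForm (fun p q => g (J p) q) (J a) (J b) (J c))) x y z w = 0

section RankOneBracket

variable {L : Type} [LieRing L] [LieAlgebra ℝ L] {J : L →ₗ[ℝ] L} {α β : L →ₗ[ℝ] ℝ} {Z : L}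

theorem lie_eq_wedge_smul_of_basis {ι : Type*} [LinearOrder ι] (e : Module.Basis ι ℝ L)
    (h : ∀ i j, i < j → ⁅e i, e j⁆ = (α (e i) * β (e j) - α (e j) * β (e i)) • Z) (x y : L) :
    ⁅x, y⁆ = (α x * β y - α y * β x) • Z := by
  let ω : L →ₗ[ℝ] L →ₗ[ℝ] L := LinearMap.mk₂ ℝ (fun x y => (α x * β y - α y * β x) • Z)
    (fun _ _ _ => by simp only [map_add]; module) (fun _ _ _ => by simp only [map_smul]; module)
    (fun _ _ _ => by simp only [map_add]; module) (fun _ _ _ => by simp only [map_smul]; module)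
  suffices (LieModule.toEnd ℝ L L : L →ₗ[ℝ] Module.End ℝ L) = ω from
    LinearMap.congr_fun₂ this x y
  refine LinearMap.ext_basis e e fun i j => ?_
  simp only [LieModule.toEnd_apply_apply, LieHom.coe_toLinearMap, ω, LinearMap.mk₂_apply]
  rcases lt_trichotomy i j with hij | rfl | hji
  · exact h i j hij
  · simp
  · rw [← lie_skew, h j i hji]
    module

theorem nijenhuis_eq_zero_of_lie_eq_wedge_smul
    (hbr : ∀ x y, ⁅x, y⁆ = (α x * β y - α y * β x) • Z)
    (hα : α ∘ₗ J = β) (hβ : β ∘ₗ J = -α) (x y : L) :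
    ⁅J x, J y⁆ - ⁅x, y⁆ - J ⁅J x, y⁆ - J ⁅x, J y⁆ = 0 := by
  have hαJ (x : L) : α (J x) = β x := LinearMap.congr_fun hα x
  have hβJ (x : L) : β (J x) = -α x := LinearMap.congr_fun hβ x
  simp only [hbr, map_smul, hαJ, hβJ]
  module

theorem isStrongKT_of_lie_eq_wedge_smul
    (hbr : ∀ x y, ⁅x, y⁆ = (α x * β y - α y * β x) • Z)
    (hα : α ∘ₗ J = β) (hβ : β ∘ₗ J = -α) (hαZ : α Z = 0) (hβZ : β Z = 0) (g : L →ₗ[ℝ] L →ₗ[ℝ] ℝ) :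
    IsStrongKT J g := by
  have hαJ (x : L) : α (J x) = β x := LinearMap.congr_fun hα x
  have hβJ (x : L) : β (J x) = -α x := LinearMap.congr_fun hβ x
  intro x y z w
  simp only [dThreeForm, dTwoForm, hbr, map_smul, hαJ, hβJ, hαZ, hβZ, LinearMap.smul_apply,
    smul_eq_mul]
  ring

end RankOneBracket

/-- For all real numbers `t` and `s`: on the Lie algebra `𝔫'_{t,s}` (with basis `e₁, …, e₆` and
only nonzero brackets `[e₁,e₂] = −t² e₆`, `[e₁,e₄] = −ts e₆`, `[e₂,e₃] = ts e₆`,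
`[e₃,e₄] = −s² e₆`), the almost complex structure `J` (with `Je₁ = e₂`, `Je₂ = −e₁`,
`Je₃ = e₄`, `Je₄ = −e₃`, `Je₅ = e₆`, `Je₆ = −e₅`) is integrable (its Nijenhuis tensor
vanishes), the inner product `g` making `e₁, …, e₆` orthonormal is compatible with `J`,
and the resulting Hermitian structure `(J,g)` is strong KT. -/
theorem nts'_integrable_compatible_strongKT (t s : ℝ)
    (L : Type) [LieRing L] [LieAlgebra ℝ L] (e : Module.Basis (Fin 6) ℝ L)
    (h01 : ⁅e 0, e 1⁆ = (-(t^2)) • e 5) (h03 : ⁅e 0, e 3⁆ = (-(t*s)) • e 5)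
    (h12 : ⁅e 1, e 2⁆ = (t*s) • e 5) (h23 : ⁅e 2, e 3⁆ = (-(s^2)) • e 5)
    (h02 : ⁅e 0, e 2⁆ = 0) (h13 : ⁅e 1, e 3⁆ = 0)
    (h04 : ⁅e 0, e 4⁆ = 0) (h05 : ⁅e 0, e 5⁆ = 0)
    (h14 : ⁅e 1, e 4⁆ = 0) (h15 : ⁅e 1, e 5⁆ = 0)
    (h24 : ⁅e 2, e 4⁆ = 0) (h25 : ⁅e 2, e 5⁆ = 0)
    (h34 : ⁅e 3, e 4⁆ = 0) (h35 : ⁅e 3, e 5⁆ = 0)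
    (h45 : ⁅e 4, e 5⁆ = 0)
    (J : L →ₗ[ℝ] L)
    (hJ0 : J (e 0) = e 1) (hJ1 : J (e 1) = -e 0)
    (hJ2 : J (e 2) = e 3) (hJ3 : J (e 3) = -e 2)
    (hJ4 : J (e 4) = e 5) (hJ5 : J (e 5) = -e 4)
    (g : L →ₗ[ℝ] L →ₗ[ℝ] ℝ)
    (horth : ∀ i j : Fin 6, g (e i) (e j) = if i = j then 1 else 0) :
    (∀ x y : L, ⁅J x, J y⁆ - ⁅x, y⁆ - J ⁅J x, y⁆ - J ⁅x, J y⁆ = 0) ∧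
    (∀ x y : L, g (J x) (J y) = g x y) ∧
    IsStrongKT J g := by
  set α : L →ₗ[ℝ] ℝ := t • e.coord 0 + s • e.coord 2
  set β : L →ₗ[ℝ] ℝ := -(t • e.coord 1 + s • e.coord 3)
  have hbr : ∀ x y, ⁅x, y⁆ = (α x * β y - α y * β x) • e 5 := by
    refine lie_eq_wedge_smul_of_basis e fun i j hij => ?_
    fin_cases i <;> fin_cases j <;> simp at hij <;>
      simp [α, β, h01, h03, h12, h23, h02, h13, h04, h05, h14, h15, h24, h25, h34, h35, h45] <;>
      module
  have hα : α ∘ₗ J = β := e.ext fun i => by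
    fin_cases i <;> simp [α, β, hJ0, hJ1, hJ2, hJ3, hJ4, hJ5]
  have hβ : β ∘ₗ J = -α := e.ext fun i => by
    fin_cases i <;> simp [α, β, hJ0, hJ1, hJ2, hJ3, hJ4, hJ5]
  have hJg : g.compl₁₂ J J = g := LinearMap.ext_basis e e fun i j => by
    fin_cases i <;> fin_cases j <;> simp [hJ0, hJ1, hJ2, hJ3, hJ4, hJ5, horth]
  exact ⟨nijenhuis_eq_zero_of_lie_eq_wedge_smul hbr hα hβ,
    fun x y => LinearMap.congr_fun₂ hJg x y,
    isStrongKT_of_lie_eq_wedge_smul hbr hα hβ (by simp [α]) (by simp [β]) g⟩
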